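/- Let S = ℝ² with coordinates (x, y) and define the 2-form Ω_{nh} = dx∧dp_x + dy∧dp_y − (y p_x/(1+y²)) dx∧dy on T*ℝ² (the case a = 0 of the nonholonomic particle). Then the 2-form Ω̄ := (1+y²)^{−1/2} Ω_{nh} is closed, and in the coordinates (x, y, p̃_x, p̃_y) with p̃_x = (1+y²)^{−1/2} p_x, p̃_y = (1+y²)^{−1/2} p_y, one has Ω̄ = dx∧dp̃_x + dy∧dp̃_y. -/

import Mathlib

open BigOperators

noncomputable section

/-- Exterior derivative of a 2-form (coordinate formula, on constant vectors). -/
def d2 {E : Type*} [NormedAddCommGroup E] [NormedSpace ℝ E]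
    (Ω : E → E → E → ℝ) : E → E → E → E → ℝ :=
  fun x u v w => fderiv ℝ (fun y => Ω y v w) x u
    - fderiv ℝ (fun y => Ω y u w) x v + fderiv ℝ (fun y => Ω y u v) x w

/-- Wedge product of two 1-forms. -/
def wedge11 {E : Type*} (α β : E → E → ℝ) : E → E → E → ℝ :=
  fun x u v => α x u * β x v - α x v * β x u

/-- The 2-form `Ω_{nh} = dx∧dp_x + dy∧dp_y − (y p_x/(1+y²)) dx∧dy` on
`T*ℝ² ≅ ℝ⁴` with coordinates `(x, y, p_x, p_y) = (q 0, q 1, q 2, q 3)`. -/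
def Omnh : (Fin 4 → ℝ) → (Fin 4 → ℝ) → (Fin 4 → ℝ) → ℝ := fun q u v =>
  (u 0 * v 2 - v 0 * u 2) + (u 1 * v 3 - v 1 * u 3)
    - q 1 * q 2 / (1 + q 1 ^ 2) * (u 0 * v 1 - v 0 * u 1)

/-- `Ω̄ = (1+y²)^{−1/2} Ω_{nh}`. -/
def Ombar : (Fin 4 → ℝ) → (Fin 4 → ℝ) → (Fin 4 → ℝ) → ℝ := fun q u v =>
  (1 + q 1 ^ 2) ^ (-(1 : ℝ) / 2) * Omnh q u v

/-!
With `g = (1 + y²)^{-1/2}` one has `g' = -(y / (1 + y²)) g`, which is exactly what makes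
`Ω̄ = dx∧d(g p_x) + dy∧d(g p_y)`: the `dx∧dy` term of `d(g p_x)` reproduces the twisted
term of `Ω_{nh}`. Each summand has the form `α∧df` with `α` constant, and `d(α∧df)` is an
alternating sum of second derivatives of `f` which cancel by symmetry of the Hessian;
hence `Ω̄` is closed.
-/

section ExteriorDerivative

variable {E : Type*} [NormedAddCommGroup E] [NormedSpace ℝ E]

lemma d2_add {Ω₁ Ω₂ : E → E → E → ℝ} {x : E}
    (h₁ : ∀ v w, DifferentiableAt ℝ (fun y => Ω₁ y v w) x)
    (h₂ : ∀ v w, DifferentiableAt ℝ (fun y => Ω₂ y v w) x) (u v w : E) :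
    d2 (Ω₁ + Ω₂) x u v w = d2 Ω₁ x u v w + d2 Ω₂ x u v w := by
  simp only [d2, Pi.add_apply]
  rw [fderiv_fun_add (h₁ v w) (h₂ v w), fderiv_fun_add (h₁ u w) (h₂ u w),
    fderiv_fun_add (h₁ u v) (h₂ u v)]
  simp only [add_apply]
  ring

lemma fderiv_fderiv_apply_const {f : E → ℝ} {x : E} (hf : DifferentiableAt ℝ (fderiv ℝ f) x)
    (u w : E) : fderiv ℝ (fun y => fderiv ℝ f y w) x u = fderiv ℝ (fderiv ℝ f) x u w := by
  simp [fderiv_clm_apply hf (differentiableAt_const w)]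

lemma differentiableAt_wedge11_const_fderiv (α : E → ℝ) {f : E → ℝ} {x : E}
    (hf : DifferentiableAt ℝ (fderiv ℝ f) x) (v w : E) :
    DifferentiableAt ℝ
      (fun y => wedge11 (fun _ s => α s) (fun p s => fderiv ℝ f p s) y v w) x := by
  unfold wedge11
  fun_prop

lemma d2_wedge11_const_fderiv (α : E → ℝ) {f : E → ℝ} {x : E} (hf : ContDiffAt ℝ 2 f x)
    (u v w : E) :
    d2 (wedge11 (fun _ s => α s) (fun p s => fderiv ℝ f p s)) x u v w = 0 := by
  have hdf : DifferentiableAt ℝ (fderiv ℝ f) x :=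
    (hf.fderiv_right (m := 1) le_rfl).differentiableAt one_ne_zero
  have hsymm := hf.isSymmSndFDerivAt (by simp)
  have hd : ∀ c, DifferentiableAt ℝ (fun y => fderiv ℝ f y c) x :=
    fun c => hdf.clm_apply (differentiableAt_const c)
  have hterm : ∀ a b c,
      fderiv ℝ (fun y => α b * fderiv ℝ f y c - α c * fderiv ℝ f y b) x a
        = α b * fderiv ℝ (fderiv ℝ f) x a c - α c * fderiv ℝ (fderiv ℝ f) x a b := by
    intro a b c
    rw [fderiv_fun_sub ((hd c).const_mul _) ((hd b).const_mul _), fderiv_const_mul (hd c),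
      fderiv_const_mul (hd b)]
    simp only [sub_apply, smul_apply, smul_eq_mul, fderiv_fderiv_apply_const hdf]
  simp only [d2, wedge11, hterm]
  rw [hsymm v u, hsymm w v, hsymm w u]
  ring

end ExteriorDerivative

lemma hasDerivAt_one_add_sq_rpow (p t : ℝ) :
    HasDerivAt (fun s : ℝ => (1 + s ^ 2) ^ p) (2 * p * t / (1 + t ^ 2) * (1 + t ^ 2) ^ p) t := by
  have hpos : 0 < 1 + t ^ 2 := by positivity
  have h := ((hasDerivAt_pow 2 t).const_add 1).rpow_const (p := p) (Or.inl hpos.ne')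
  convert h using 1
  rw [Real.rpow_sub_one hpos.ne']
  field_simp
  ring

/-- The rescaled momenta `p̃_x = rescaledMomentum 2`, `p̃_y = rescaledMomentum 3`. -/
def rescaledMomentum (i : Fin 4) (z : Fin 4 → ℝ) : ℝ := (1 + z 1 ^ 2) ^ (-(1 : ℝ) / 2) * z i

lemma contDiff_rescaledMomentum (i : Fin 4) : ContDiff ℝ 2 (rescaledMomentum i) :=
  ((contDiff_const.add ((contDiff_apply ℝ ℝ 1).pow 2)).rpow_const_of_ne
    (fun z => by positivity)).mul (contDiff_apply ℝ ℝ i)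

lemma fderiv_rescaledMomentum_apply (i : Fin 4) (q u : Fin 4 → ℝ) :
    fderiv ℝ (rescaledMomentum i) q u
      = -(q 1 / (1 + q 1 ^ 2)) * (1 + q 1 ^ 2) ^ (-(1 : ℝ) / 2) * u 1 * q i
        + (1 + q 1 ^ 2) ^ (-(1 : ℝ) / 2) * u i := by
  have hy : HasFDerivAt (fun z : Fin 4 → ℝ => z 1) (ContinuousLinearMap.proj (R := ℝ) 1) q :=
    hasFDerivAt_apply 1 q
  have hp : HasFDerivAt (fun z : Fin 4 → ℝ => z i) (ContinuousLinearMap.proj (R := ℝ) i) q :=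
    hasFDerivAt_apply i q
  have h := ((hasDerivAt_one_add_sq_rpow (-(1 : ℝ) / 2) (q 1)).comp_hasFDerivAt q hy).mul hp
  rw [(show HasFDerivAt (rescaledMomentum i) _ q from h).fderiv]
  simp only [Function.comp_apply, add_apply, smul_apply, ContinuousLinearMap.proj_apply,
    smul_eq_mul]
  ring

lemma Ombar_eq_wedge11_add_wedge11 :
    Ombar = wedge11 (fun _ s => s 0) (fun p s => fderiv ℝ (rescaledMomentum 2) p s)
      + wedge11 (fun _ s => s 1) (fun p s => fderiv ℝ (rescaledMomentum 3) p s) := by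
  funext q u v
  simp only [Pi.add_apply, wedge11, fderiv_rescaledMomentum_apply, Ombar, Omnh]
  ring

/-- `Ω̄` is closed, and in the rescaled momenta `p̃_x = (1+y²)^{−1/2} p_x`,
`p̃_y = (1+y²)^{−1/2} p_y` one has `Ω̄ = dx∧dp̃_x + dy∧dp̃_y`. -/
theorem stmt14 :
    (∀ q u v w, d2 Ombar q u v w = 0) ∧
      (∀ q u v, Ombar q u v =
        wedge11 (fun _ s => s 0)
          (fun p s => fderiv ℝ (fun z : Fin 4 → ℝ => (1 + z 1 ^ 2) ^ (-(1 : ℝ) / 2) * z 2) p s)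
          q u v
        + wedge11 (fun _ s => s 1)
          (fun p s => fderiv ℝ (fun z : Fin 4 → ℝ => (1 + z 1 ^ 2) ^ (-(1 : ℝ) / 2) * z 3) p s)
          q u v) := by
  refine ⟨fun q u v w => ?_, fun q u v => congrFun₃ Ombar_eq_wedge11_add_wedge11 q u v⟩
  have hdiff : ∀ i, DifferentiableAt ℝ (fderiv ℝ (rescaledMomentum i)) q := fun i =>
    ((contDiff_rescaledMomentum i).fderiv_right (m := 1) le_rfl).differentiable one_ne_zero q
  rw [Ombar_eq_wedge11_add_wedge11,
    d2_add (differentiableAt_wedge11_const_fderiv _ (hdiff 2))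
      (differentiableAt_wedge11_const_fderiv _ (hdiff 3)),
    d2_wedge11_const_fderiv _ (contDiff_rescaledMomentum 2).contDiffAt,
    d2_wedge11_const_fderiv _ (contDiff_rescaledMomentum 3).contDiffAt, add_zero]
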